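/- Suppose M < 0, N < 0 and δ₁/K₀ < δ₂. Then the transcendental equation G(M,p,y) = y + N·y³ has at least one positive solution ξ. -/
import Mathlib


open Real MeasureTheory Filter Set

/-- `g p y = ∫₀^y exp(−r² + p·r·y) dr`. -/
noncomputable def g (p y : ℝ) : ℝ := ∫ r in (0:ℝ)..y, Real.exp (-r^2 + p*r*y)

/-- Complementary error function `erfc z = (2/√π)∫_z^∞ exp(−r²) dr`. -/
noncomputable def erfc (z : ℝ) : ℝ := (2 / Real.sqrt π) * ∫ r in Set.Ioi z, Real.exp (-r^2)

/-- `G₁(p,y) = exp((p−1)y²)/(K₀ + g(p,y))`. -/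
noncomputable def G₁ (K₀ p y : ℝ) : ℝ := Real.exp ((p-1)*y^2) / (K₀ + g p y)

/-- `G₂(y) = exp(−γ₀²y²)/erfc(γ₀y)`. -/
noncomputable def G₂ (γ₀ y : ℝ) : ℝ := Real.exp (-(γ₀^2*y^2)) / erfc (γ₀*y)

/-- `G(M,p,y) = δ₁(1 − (A·M/B)y²)G₁(p,y) − δ₂(1 + M·y²)G₂(y)`. -/
noncomputable def Gfun (A B δ₁ δ₂ K₀ γ₀ M p y : ℝ) : ℝ :=
  δ₁ * (1 - A*M/B * y^2) * G₁ K₀ p y - δ₂ * (1 + M*y^2) * G₂ γ₀ y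

lemma integrable_gauss : Integrable (fun r : ℝ => Real.exp (-r^2)) := by
  have := integrable_exp_neg_mul_sq (b := 1) one_pos
  simpa using this

lemma erfc_pos (z : ℝ) : 0 < erfc z := by
  have h1 : 0 < ∫ r in Set.Ioi z, Real.exp (-r^2) := by
    rw [setIntegral_pos_iff_support_of_nonneg_ae]
    · have : Function.support (fun r : ℝ => Real.exp (-r^2)) = Set.univ := by
        ext r; simp [Real.exp_ne_zero]
      rw [this, Set.univ_inter]
      simp [Real.volume_Ioi]
    · exact Filter.Eventually.of_forall fun r => (Real.exp_pos _).le
    · exact integrable_gauss.integrableOn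
  have h2 : 0 < 2 / Real.sqrt π := by positivity
  exact mul_pos h2 h1

lemma continuous_erfc : Continuous erfc := by
  have hInt := integrable_gauss
  have key : ∀ z : ℝ, (∫ r in Set.Ioi z, Real.exp (-r^2)) =
      (∫ r, Real.exp (-r^2)) - ((∫ r in Set.Iic (0:ℝ), Real.exp (-r^2)) + ∫ r in (0:ℝ)..z, Real.exp (-r^2)) := by
    intro z
    have h1 : (∫ r in Set.Iic z, Real.exp (-r^2)) + (∫ r in Set.Ioi z, Real.exp (-r^2)) = ∫ r, Real.exp (-r^2) :=
      intervalIntegral.integral_Iic_add_Ioi hInt.integrableOn hInt.integrableOn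
    have h2 : (∫ r in Set.Iic z, Real.exp (-r^2)) - (∫ r in Set.Iic (0:ℝ), Real.exp (-r^2)) = ∫ r in (0:ℝ)..z, Real.exp (-r^2) :=
      intervalIntegral.integral_Iic_sub_Iic hInt.integrableOn hInt.integrableOn
    linarith
  have hc : Continuous fun z : ℝ => ∫ r in Set.Ioi z, Real.exp (-r^2) := by
    simp only [key]
    exact continuous_const.sub (continuous_const.add (hInt.continuous_primitive 0))
  exact continuous_const.mul hc

lemma continuous_g (p : ℝ) : Continuous (g p) := by
  unfold g
  exact intervalIntegral.continuous_parametric_intervalIntegral_of_continuous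
    (f := fun y r => Real.exp (-r^2 + p*r*y)) (by fun_prop) continuous_id

lemma g_nonneg (p : ℝ) {y : ℝ} (hy : 0 ≤ y) : 0 ≤ g p y :=
  intervalIntegral.integral_nonneg hy (fun r _ => (Real.exp_pos _).le)

lemma g_zero (p : ℝ) : g p 0 = 0 := by simp [g]

lemma erfc_zero : erfc 0 = 1 := by
  have : (∫ r in Set.Ioi (0:ℝ), Real.exp (-r^2)) = Real.sqrt π / 2 := by
    have := integral_gaussian_Ioi 1
    simpa using this
  rw [erfc, this]
  have hπ : Real.sqrt π > 0 := Real.sqrt_pos.2 Real.pi_pos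
  field_simp

/-- If `M < 0`, `N < 0` and `δ₁/K₀ < δ₂`, then the transcendental equation
has at least one positive solution `ξ`. -/
theorem stmt8 (A B δ₁ δ₂ K₀ γ₀ M N p : ℝ)
    (hA : 0 < A) (hB : 0 < B) (hδ₁ : 0 < δ₁) (hδ₂ : 0 < δ₂)
    (hK₀ : 0 < K₀) (hγ₀ : 0 < γ₀) (hM : M < 0) (hN : N < 0)
    (h : δ₁ / K₀ < δ₂) :
    ∃ ξ : ℝ, 0 < ξ ∧ Gfun A B δ₁ δ₂ K₀ γ₀ M p ξ = ξ + N * ξ^3 := by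
  set F : ℝ → ℝ := fun y => Gfun A B δ₁ δ₂ K₀ γ₀ M p y - (y + N * y^3) with hF
  -- choose right endpoint
  set b : ℝ := max (Real.sqrt (1 / (-M))) (Real.sqrt (1 / (-N))) + 1 with hb
  have hbpos : 0 < b := by positivity
  -- continuity on Icc 0 b
  have hden : ∀ y ∈ Set.Icc (0:ℝ) b, K₀ + g p y ≠ 0 := by
    intro y hy
    have := g_nonneg p hy.1
    positivity
  have hcont : ContinuousOn F (Set.Icc 0 b) := by
    apply ContinuousOn.sub
    · unfold Gfun G₁ G₂
      apply ContinuousOn.sub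
      · apply ContinuousOn.mul (by fun_prop)
        exact ContinuousOn.div (by fun_prop) ((continuous_const.add (continuous_g p)).continuousOn) hden
      · apply ContinuousOn.mul (by fun_prop)
        apply ContinuousOn.div (by fun_prop) (continuous_erfc.comp (by fun_prop)).continuousOn
        intro y _; exact (erfc_pos _).ne'
    · fun_prop
  -- F 0 < 0
  have hF0 : F 0 < 0 := by
    have : Gfun A B δ₁ δ₂ K₀ γ₀ M p 0 = δ₁ / K₀ - δ₂ := by
      simp [Gfun, G₁, G₂, g_zero, erfc_zero, div_eq_mul_inv]
    simp only [hF, this]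
    norm_num
    linarith [h]
  -- F b > 0
  have hFb : 0 < F b := by
    have hMb : 1 + M * b^2 ≤ 0 := by
      have h1 : Real.sqrt (1 / (-M)) ≤ b - 1 := by
        simp [hb]
      have h2 : 1 / (-M) ≤ b^2 := by
        have := Real.sq_sqrt (div_nonneg zero_le_one (by linarith : (0:ℝ) ≤ -M))
        nlinarith [Real.sqrt_nonneg (1 / (-M))]
      have hMneg : 0 < -M := by linarith
      rw [div_le_iff₀ hMneg] at h2
      nlinarith
    have hNb : b + N * b^3 < 0 := by
      have h1 : Real.sqrt (1 / (-N)) ≤ b - 1 := by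
        simp [hb]
      have h2 : 1 / (-N) < b^2 := by
        have := Real.sq_sqrt (div_nonneg zero_le_one (by linarith : (0:ℝ) ≤ -N))
        nlinarith [Real.sqrt_nonneg (1 / (-N))]
      have hNneg : 0 < -N := by linarith
      rw [div_lt_iff₀ hNneg] at h2
      nlinarith
    have hG1 : 0 ≤ G₁ K₀ p b := by
      have := g_nonneg p hbpos.le
      unfold G₁
      positivity
    have hG2 : 0 < G₂ γ₀ b := by
      unfold G₂
      exact div_pos (Real.exp_pos _) (erfc_pos _)
    have hGpos : 0 ≤ Gfun A B δ₁ δ₂ K₀ γ₀ M p b := by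
      unfold Gfun
      have ht1 : 0 ≤ δ₁ * (1 - A*M/B * b^2) * G₁ K₀ p b := by
        have : 0 < 1 - A*M/B * b^2 := by
          have : A*M/B < 0 := div_neg_of_neg_of_pos (mul_neg_of_pos_of_neg hA hM) hB
          nlinarith
        positivity
      have ht2 : δ₂ * (1 + M*b^2) * G₂ γ₀ b ≤ 0 := by
        apply mul_nonpos_of_nonpos_of_nonneg _ hG2.le
        exact mul_nonpos_of_nonneg_of_nonpos hδ₂.le hMb
      exact sub_nonneg.2 (ht2.trans ht1)
    simp only [hF]
    linarith
  -- IVT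
  have := intermediate_value_Ioo (le_of_lt hbpos) hcont
  have hmem : (0:ℝ) ∈ Set.Ioo (F 0) (F b) := ⟨hF0, hFb⟩
  obtain ⟨ξ, hξ, hFξ⟩ := this hmem
  refine ⟨ξ, hξ.1, ?_⟩
  have : F ξ = 0 := hFξ
  simp only [hF] at this
  linarith
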